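/- Let R be a ring and let R[x,x^{-1}] be the Laurent polynomial ring over R, graded by ℤ with x in degree 1 and elements of R in degree 0. Then the nil radical of R[x,x^{-1}] is homogeneous: if a Laurent polynomial f = Σ_i r_i x^i belongs to the nil radical of R[x,x^{-1}], then each monomial r_i x^i belongs to the nil radical of R[x,x^{-1}]. -/

import Mathlib

def TwoSidedIdeal.IsNil {R : Type*} [Ring R] (I : TwoSidedIdeal R) : Prop :=
  ∀ x ∈ I, IsNilpotent x

noncomputable def nilRad (R : Type*) [Ring R] : TwoSidedIdeal R :=
  sSup {I : TwoSidedIdeal R | I.IsNil}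

/-!
Write `A = R[T;T⁻¹]`. Since `(nilRad A ∩ R)[T;T⁻¹]` is an ideal, and multiplying by `T⁻ⁱ` moves
the `i`-th coefficient to degree `0`, it suffices to show that `C g₀ ∈ nilRad A` whenever `g` lies
in a nil ideal `N`. This goes by induction on the number of monomials of `g`, using two
operations that keep `g` inside some nil ideal.

* Euler twist: for `s ∈ ℤ`, `∑ₙ (s - n) gₙ Tⁿ` lies in a nil ideal. In `A[U;U⁻¹]`, the element
  `markDegree g = ∑ₙ gₙ Tⁿ Uⁿ` is congruent to `g Uˢ` modulo `1 - U`; the quotient `τ` of the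
  difference by `1 - U` evaluates at `U = 1` to the twisted element. The values at `U = 1` of
  all `τ` with `(1 - U) τ ≡ markDegree σ` modulo `N[U;U⁻¹]`, `σ ∈ N`, form an ideal (`1 - U` is
  central and `markDegree` is a ring map), and it is nil: `1 - U` is a non-zero-divisor modulo
  `N[U;U⁻¹]`, so nilpotence of `σ` passes to `τ` modulo `N[U;U⁻¹]`. For `s` in the support of
  `g` the twist has fewer monomials, so by induction `s g₀ ∈ nilRad A` for every such `s`.
* Stretch: pulling `g` back along `T ↦ T^d`, with `d` the gcd of its support, makes the support
  generate `ℤ`; then `g₀` itself is a `ℤ`-combination of the `s g₀`.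
-/

open LaurentPolynomial AddMonoidAlgebra

theorem Finsupp.eq_zero_of_forall_apply_eq_apply_sub_one {M : Type*} [Zero M] {f : ℤ →₀ M}
    (hf : ∀ m, f m = f (m - 1)) : f = 0 := by
  by_contra hne
  have hsupp : f.support.Nonempty := Finsupp.support_nonempty_iff.2 hne
  have hbelow : f.support.min' hsupp - 1 ∈ f.support := by
    rw [Finsupp.mem_support_iff, ← hf, ← Finsupp.mem_support_iff]
    exact f.support.min'_mem hsupp
  have := f.support.min'_le _ hbelow
  omega

theorem Int.exists_dvd_one_mem_closure {S : Set ℤ} (hS : ¬ S ⊆ {0}) :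
    ∃ d ≠ 0, (∀ s ∈ S, d ∣ s) ∧ (1 : ℤ) ∈ AddSubgroup.closure ((d * ·) ⁻¹' S) := by
  obtain ⟨d, hd⟩ := Int.subgroup_cyclic (AddSubgroup.closure S)
  have hdvd : ∀ s ∈ S, d ∣ s := fun s hs => by
    have : s ∈ AddSubgroup.closure {d} := hd ▸ AddSubgroup.subset_closure hs
    obtain ⟨k, rfl⟩ := AddSubgroup.mem_closure_singleton.1 this
    exact ⟨k, by simp [mul_comm]⟩
  have hd0 : d ≠ 0 := by
    rintro rfl
    exact hS fun s hs => zero_dvd_iff.1 (hdvd s hs)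
  refine ⟨d, hd0, hdvd, ?_⟩
  have himage : (d * ·) '' ((d * ·) ⁻¹' S) = S :=
    Set.image_preimage_eq_of_subset fun s hs => (hdvd s hs).imp fun _ h => h.symm
  have hmem : d ∈ (AddSubgroup.closure ((d * ·) ⁻¹' S)).map (AddMonoidHom.mulLeft d) := by
    rw [AddMonoidHom.map_closure, AddMonoidHom.coe_mulLeft, himage, hd]
    exact AddSubgroup.mem_closure_singleton_self d
  obtain ⟨c, hc, hdc⟩ := AddSubgroup.mem_map.1 hmem
  rwa [mul_left_cancel₀ hd0 (hdc.trans (mul_one d).symm)] at hc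

namespace TwoSidedIdeal

variable {S : Type*} [Ring S]

theorem IsNil.comap {S' : Type*} [Ring S'] {f : S →+* S'} (hf : Function.Injective f)
    {N : TwoSidedIdeal S'} (hN : N.IsNil) : (N.comap f).IsNil :=
  fun _ hx => (IsNilpotent.map_iff hf).1 (hN _ ((mem_comap _).1 hx))

theorem mem_of_forall_mul_intCast_mem (I : TwoSidedIdeal S) {c : S} {K : Set ℤ}
    (hK : (1 : ℤ) ∈ AddSubgroup.closure K) (hc : ∀ k ∈ K, c * k ∈ I) : c ∈ I := by
  simpa using AddSubgroup.closure_induction (p := fun (k : ℤ) _ => c * (k : S) ∈ I) hc (by simp)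
    (fun a b _ _ ha hb => by simpa [mul_add] using I.add_mem ha hb)
    (fun a _ ha => by simpa using I.neg_mem ha) hK

theorem pow_sub_pow_mem (I : TwoSidedIdeal S) {a b : S} (h : a - b ∈ I) (n : ℕ) :
    a ^ n - b ^ n ∈ I :=
  (I.rel_iff _ _).1 (I.ringCon.toCon.pow n ((I.rel_iff _ _).2 h))

theorem mk'_eq_zero_iff {I : TwoSidedIdeal S} {a : S} : I.ringCon.mk' a = 0 ↔ a ∈ I := by
  rw [← mem_ker, ker_ringCon_mk']

end TwoSidedIdeal

namespace LaurentPolynomial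

section Ring

variable {S : Type*} [Ring S]

theorem commute_one_sub_T (f : S[T;T⁻¹]) : Commute (1 - T 1) f :=
  (Commute.one_left f).sub_left (commute_T 1 f)

theorem isLeftRegular_one_sub_T : IsLeftRegular (1 - T 1 : S[T;T⁻¹]) := by
  refine isLeftRegular_iff_right_eq_zero_of_mul.2 fun f hf => coeff_injective ?_
  refine Finsupp.eq_zero_of_forall_apply_eq_apply_sub_one fun m => ?_
  have := congrArg (fun f => f.coeff m) (sub_eq_zero.1 ((sub_mul _ _ _).symm.trans hf))
  rwa [one_mul, T, coeff_single_mul_apply, one_mul, neg_add_eq_sub] at this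

variable (S) in
noncomputable def evalOne : S[T;T⁻¹] →+* S :=
  liftNCRingHom (RingHom.id S) 1 fun _ _ => Commute.one_right _

@[simp]
theorem evalOne_C_mul_T (r : S) (n : ℤ) : evalOne S (C r * T n) = r := by
  simp [evalOne, ← single_eq_C_mul_T]

@[simp]
theorem evalOne_T (n : ℤ) : evalOne S (T n) = 1 := by
  simpa using evalOne_C_mul_T (1 : S) n

theorem evalOne_mapRingHom {S' : Type*} [Ring S'] (f : S →+* S') (x : S[T;T⁻¹]) :
    evalOne S' (mapRingHom ℤ f x) = f (evalOne S x) := by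
  induction x using AddMonoidAlgebra.induction_linear with
  | zero => simp
  | add x y hx hy => simp [hx, hy]
  | single n r =>
    rw [mapRingHom_single]
    simp only [evalOne, liftNCRingHom_single]
    simp

theorem exists_one_sub_T_mul_eq (a : ℤ) :
    ∃ ζ : S[T;T⁻¹], (1 - T 1) * ζ = 1 - T a ∧ evalOne S ζ = a := by
  induction a using Int.induction_on with
  | zero => exact ⟨0, by simp [T_zero]⟩
  | succ a ih =>
    obtain ⟨ζ, hζ, hev⟩ := ih
    refine ⟨ζ + T a, ?_, by simp [hev]⟩
    rw [mul_add, hζ, sub_mul, one_mul, ← T_add, add_comm 1 (a : ℤ)]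
    abel
  | pred a ih =>
    obtain ⟨ζ, hζ, hev⟩ := ih
    refine ⟨ζ - T (-a - 1), ?_, by simp [hev]⟩
    rw [mul_sub, hζ, sub_mul, one_mul, ← T_add, show 1 + (-(a : ℤ) - 1) = -a by ring]
    abel

end Ring

end LaurentPolynomial

namespace TwoSidedIdeal

variable {S : Type*} [Ring S]

noncomputable def laurent (I : TwoSidedIdeal S) : TwoSidedIdeal S[T;T⁻¹] :=
  ker (mapRingHom ℤ I.ringCon.mk')

variable {I : TwoSidedIdeal S}

theorem mem_laurent {f : S[T;T⁻¹]} : f ∈ I.laurent ↔ ∀ n, f.coeff n ∈ I := by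
  simp only [laurent, mem_ker, LaurentPolynomial.ext_iff, coeff_mapRingHom]
  exact forall_congr' fun n => mk'_eq_zero_iff

theorem C_mem_laurent {a : S} (ha : a ∈ I) : C a ∈ I.laurent :=
  mem_laurent.2 fun n => by
    rw [C_apply]
    split_ifs
    exacts [ha, I.zero_mem]

theorem mem_laurent_of_one_sub_T_pow_mul_mem {f : S[T;T⁻¹]} (k : ℕ)
    (h : (1 - T 1) ^ k * f ∈ I.laurent) : f ∈ I.laurent := by
  rw [laurent, mem_ker] at h ⊢
  refine isLeftRegular_one_sub_T.pow k ?_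
  have hT : mapRingHom ℤ I.ringCon.mk' (1 - T 1) = 1 - T 1 := by
    rw [map_sub, map_one, T, mapRingHom_single, map_one, T]
  dsimp only
  rwa [mul_zero, ← hT, ← map_pow, ← map_mul]

theorem evalOne_mem_of_mem_laurent {f : S[T;T⁻¹]} (h : f ∈ I.laurent) : evalOne S f ∈ I := by
  rw [laurent, mem_ker] at h
  rw [← mk'_eq_zero_iff, ← evalOne_mapRingHom, h, map_zero]

end TwoSidedIdeal

namespace LaurentPolynomial

variable {R : Type*} [Ring R]

noncomputable def markDegree : R[T;T⁻¹] →+* R[T;T⁻¹][T;T⁻¹] :=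
  liftNCRingHom (C.comp C)
    { toFun := fun n => C (T n.toAdd) * T n.toAdd
      map_one' := by simp [T_zero]
      map_mul' := fun m n => by
        simp only [toAdd_mul, T_add, map_mul]
        exact (commute_T _ _).symm.mul_mul_mul_comm _ _ }
    fun r n => ((commute_T n.toAdd (C r)).symm.map C).mul_right (commute_T n.toAdd _).symm

theorem markDegree_C_mul_T (r : R) (n : ℤ) : markDegree (C r * T n) = C (C r * T n) * T n := by
  rw [← single_eq_C_mul_T, markDegree, liftNCRingHom_single]
  simp [mul_assoc]

theorem evalOne_markDegree (f : R[T;T⁻¹]) : evalOne _ (markDegree f) = f := by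
  induction f using AddMonoidAlgebra.induction_linear with
  | zero => simp
  | add f g hf hg => rw [map_add, map_add, hf, hg]
  | single n r => rw [single_eq_C_mul_T, markDegree_C_mul_T, evalOne_C_mul_T]

theorem exists_one_sub_T_mul_eq_markDegree_sub (g : R[T;T⁻¹]) (s : ℤ) :
    ∃ τ : R[T;T⁻¹][T;T⁻¹], (1 - T 1) * τ = markDegree g - C g * T s ∧
      ∀ n, (evalOne _ τ).coeff n = g.coeff n * (s - n : ℤ) := by
  induction g using AddMonoidAlgebra.induction_linear with
  | zero => exact ⟨0, by simp⟩
  | add f g hf hg =>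
    obtain ⟨τ₁, h₁, c₁⟩ := hf
    obtain ⟨τ₂, h₂, c₂⟩ := hg
    refine ⟨τ₁ + τ₂, ?_, fun n => ?_⟩
    · rw [mul_add, h₁, h₂, map_add, map_add, add_mul]
      abel
    · simp [c₁, c₂, add_mul]
  | single n r =>
    obtain ⟨ζ, hζ, hev⟩ := exists_one_sub_T_mul_eq (S := R[T;T⁻¹]) (s - n)
    refine ⟨C (C r * T n) * T n * ζ, ?_, fun m => ?_⟩
    · rw [(commute_one_sub_T _).left_comm, hζ, single_eq_C_mul_T, markDegree_C_mul_T, mul_sub,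
        mul_one, mul_assoc, ← T_add, add_sub_cancel]
    · rw [map_mul, evalOne_C_mul_T, hev, ← map_intCast (C : R →+* R[T;T⁻¹]), mul_assoc, T_mul,
        ← mul_assoc, ← map_mul, ← single_eq_C_mul_T]
      simp only [coeff_single, Finsupp.single_apply]
      split_ifs with hnm
      · rw [hnm]
      · rw [zero_mul]

def eulerSet (N : TwoSidedIdeal R[T;T⁻¹]) : Set R[T;T⁻¹] :=
  {x | ∃ τ : R[T;T⁻¹][T;T⁻¹], ∃ σ ∈ N, (1 - T 1) * τ - markDegree σ ∈ N.laurent ∧ evalOne _ τ = x}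

theorem mul_mem_eulerSet {N : TwoSidedIdeal R[T;T⁻¹]} (x : R[T;T⁻¹]) {y : R[T;T⁻¹]}
    (hy : y ∈ eulerSet N) : x * y ∈ eulerSet N := by
  obtain ⟨τ, σ, hσ, h, rfl⟩ := hy
  refine ⟨markDegree x * τ, x * σ, N.mul_mem_left _ _ hσ, ?_, by rw [map_mul, evalOne_markDegree]⟩
  convert N.laurent.mul_mem_left (markDegree x) _ h using 1
  rw [(commute_one_sub_T _).left_comm, map_mul, mul_sub]

noncomputable def eulerIdeal (N : TwoSidedIdeal R[T;T⁻¹]) : TwoSidedIdeal R[T;T⁻¹] :=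
  .mk' (eulerSet N) ⟨0, 0, N.zero_mem, by simp, map_zero _⟩
    (by
      rintro _ _ ⟨τ₁, σ₁, hσ₁, h₁, rfl⟩ ⟨τ₂, σ₂, hσ₂, h₂, rfl⟩
      refine ⟨τ₁ + τ₂, σ₁ + σ₂, N.add_mem hσ₁ hσ₂, ?_, map_add _ _ _⟩
      convert N.laurent.add_mem h₁ h₂ using 1
      rw [mul_add, map_add]
      abel)
    (fun hy => by simpa using mul_mem_eulerSet (-1) hy)
    (mul_mem_eulerSet _)
    (by
      rintro _ y ⟨τ, σ, hσ, h, rfl⟩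
      refine ⟨τ * markDegree y, σ * y, N.mul_mem_right _ _ hσ, ?_,
        by rw [map_mul, evalOne_markDegree]⟩
      convert N.laurent.mul_mem_right _ (markDegree y) h using 1
      rw [← mul_assoc, map_mul, ← sub_mul])

theorem eulerIdeal_isNil {N : TwoSidedIdeal R[T;T⁻¹]} (hN : N.IsNil) : (eulerIdeal N).IsNil := by
  intro x hx
  obtain ⟨τ, σ, hσ, h, rfl⟩ := (TwoSidedIdeal.mem_mk' ..).1 hx
  obtain ⟨k, hk⟩ := hN σ hσ
  have hpow : (1 - T 1) ^ k * τ ^ k ∈ N.laurent := by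
    simpa [← (commute_one_sub_T τ).mul_pow, ← map_pow, hk] using N.laurent.pow_sub_pow_mem h k
  have hmem : evalOne _ τ ^ k ∈ N := by
    rw [← map_pow]
    exact TwoSidedIdeal.evalOne_mem_of_mem_laurent
      (TwoSidedIdeal.mem_laurent_of_one_sub_T_pow_mul_mem k hpow)
  exact (hN _ hmem).of_pow

theorem exists_mem_eulerIdeal {N : TwoSidedIdeal R[T;T⁻¹]} {g : R[T;T⁻¹]} (hg : g ∈ N) (s : ℤ) :
    ∃ g' ∈ eulerIdeal N, ∀ n, g'.coeff n = g.coeff n * (s - n : ℤ) := by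
  obtain ⟨τ, hτ, hcoeff⟩ := exists_one_sub_T_mul_eq_markDegree_sub g s
  refine ⟨evalOne _ τ, (TwoSidedIdeal.mem_mk' ..).2 ⟨τ, g, hg, ?_, rfl⟩, hcoeff⟩
  rw [hτ, sub_sub_cancel_left]
  exact N.laurent.neg_mem (N.laurent.mul_mem_right _ _ (TwoSidedIdeal.C_mem_laurent hg))

theorem card_support_lt_of_coeff_eq_mul_sub {f g : R[T;T⁻¹]} {s : ℤ} (hs : s ∈ f.coeff.support)
    (hg : ∀ n, g.coeff n = f.coeff n * (s - n : ℤ)) :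
    g.coeff.support.card < f.coeff.support.card := by
  refine (Finset.card_le_card fun n hn => ?_).trans_lt (Finset.card_erase_lt_of_mem hs)
  rw [Finsupp.mem_support_iff, hg] at hn
  refine Finset.mem_erase.2 ⟨fun hns => ?_, Finsupp.mem_support_iff.2 fun h0 => ?_⟩
  · simp [hns] at hn
  · simp [h0] at hn

noncomputable def stretch (d : ℤ) : R[T;T⁻¹] →+* R[T;T⁻¹] :=
  mapDomainRingHom R (AddMonoidHom.mulLeft d)

section Stretch

variable {d : ℤ} (hd : d ≠ 0)
include hd

theorem stretch_injective : Function.Injective (stretch (R := R) d) :=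
  mapDomain_injective (mul_right_injective₀ hd)

theorem coeff_stretch_mul (f : R[T;T⁻¹]) (n : ℤ) : (stretch d f).coeff (d * n) = f.coeff n :=
  Finsupp.mapDomain_apply (mul_right_injective₀ hd) _ n

theorem card_support_stretch (f : R[T;T⁻¹]) :
    (stretch d f).coeff.support.card = f.coeff.support.card := by
  classical
  change (Finsupp.mapDomain (d * ·) f.coeff).support.card = _
  rw [Finsupp.mapDomain_support_of_injective (mul_right_injective₀ hd),
    Finset.card_image_of_injective _ (mul_right_injective₀ hd)]

theorem exists_stretch_eq {g : R[T;T⁻¹]} (hg : ∀ n ∈ g.coeff.support, d ∣ n) :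
    ∃ f, stretch d f = g :=
  ⟨comapDomain _ (mul_right_injective₀ hd) g,
    mapDomain_comapDomain (fun n hn => (hg n hn).imp fun _ h => h.symm) _⟩

end Stretch

theorem C_coeff_zero_mem_nilRad {N : TwoSidedIdeal R[T;T⁻¹]} (hN : N.IsNil) {g : R[T;T⁻¹]}
    (hg : g ∈ N) : C (g.coeff 0) ∈ nilRad R[T;T⁻¹] := by
  by_cases hsupp : (g.coeff.support : Set ℤ) ⊆ {0}
  · have hgC : g = C (g.coeff 0) := LaurentPolynomial.ext fun n => by
      rw [C_apply]
      split_ifs with hn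
      · rw [hn]
      · exact Finsupp.notMem_support_iff.1 fun h => hn (hsupp h)
    rw [← hgC]
    exact le_sSup (α := TwoSidedIdeal _) hN hg
  obtain ⟨d, hd, hdvd, hone⟩ := Int.exists_dvd_one_mem_closure hsupp
  obtain ⟨f, rfl⟩ := exists_stretch_eq hd hdvd
  have hf : f ∈ N.comap (stretch d) := (TwoSidedIdeal.mem_comap _).2 hg
  rw [← mul_zero d, coeff_stretch_mul hd]
  refine (nilRad _).mem_of_forall_mul_intCast_mem hone fun s hs => ?_
  have hs' : s ∈ f.coeff.support := by
    simpa [coeff_stretch_mul hd] using hs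
  obtain ⟨g', hg', hcoeff⟩ := exists_mem_eulerIdeal hf s
  have hlt : g'.coeff.support.card < (stretch d f).coeff.support.card :=
    card_support_stretch hd f ▸ card_support_lt_of_coeff_eq_mul_sub hs' hcoeff
  have := C_coeff_zero_mem_nilRad (eulerIdeal_isNil (hN.comap (stretch_injective hd))) hg'
  rwa [hcoeff, sub_zero, map_mul, map_intCast] at this
termination_by g.coeff.support.card

end LaurentPolynomial

/-- **The nil radical of a Laurent polynomial ring is homogeneous** (with respect to the
`ℤ`-grading with `x` in degree `1` and coefficients in degree `0`): if a Laurent polynomial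
`f = ∑ᵢ rᵢ xⁱ` lies in the nil radical of `R[x,x⁻¹]`, then so does each monomial `rᵢ xⁱ`. -/
theorem nilRad_laurent_homogeneous {R : Type*} [Ring R] (f : LaurentPolynomial R)
    (hf : f ∈ nilRad (LaurentPolynomial R)) (i : ℤ) :
    LaurentPolynomial.C (f.coeff i) * LaurentPolynomial.T i ∈ nilRad (LaurentPolynomial R) := by
  have hle : nilRad (LaurentPolynomial R) ≤ ((nilRad _).comap LaurentPolynomial.C).laurent :=
    sSup_le fun N hN => TwoSidedIdeal.le_iff.2 fun g hg => TwoSidedIdeal.mem_laurent.2 fun n => by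
      have := C_coeff_zero_mem_nilRad hN (N.mul_mem_left (T (-n)) _ hg)
      rwa [T, coeff_single_mul_apply, one_mul, neg_neg, add_zero, ← TwoSidedIdeal.mem_comap] at this
  exact (nilRad _).mul_mem_right _ _
    ((TwoSidedIdeal.mem_comap _).1 (TwoSidedIdeal.mem_laurent.1 (hle hf) i))
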